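/- arXiv:1507.07072 — 5 statements merged into one kernel-verified Lean document; each statement's English description precedes it below -/
import Mathlib

section
/- Let H be a d-dimensional complex Hilbert space (d ≥ 1), {φ_j}_{j=1}^d an orthonormal basis of H, and η_1,…,η_d positive reals with Σ_j η_j² = 1. Let α > 0 and let L_1,…,L_{d²} be linear operators on H satisfying ⟨L_a, L_{a'}⟩_Sc = α·δ_{aa'} for all a, a' ∈ {1,…,d²}. Then Σ_{a=1}^{d²} L_a† L_a = Σ_{j=1}^d (α/η_j²) |φ_j⟩⟨φ_j|. -/
/-!
Write `X_a` for the matrix of `L_a` in the basis `φ` and let `V` be the square `d² × d²` matrix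
whose column `a` is `(η_j (X_a)_{kj})_{(k,j)}`. The Sc-orthogonality relations say exactly that
`Vᴴ V = (α/d) • 1`; a one-sided inverse of a square matrix is two-sided, so `V Vᴴ = (α/d) • 1`
as well. Summing the entries `((k,j),(k,i))` of `V Vᴴ` over `k` gives
`η_i η_j ⟨φ_i, (∑_a L_a† L_a) φ_j⟩ = α δ_ij`.
-/

/-- The rank-one operator `|u⟩⟨v| : w ↦ ⟨v, w⟩ • u` (inner product conjugate-linear
in the first argument). -/
noncomputable def rankOne {H : Type*} [NormedAddCommGroup H] [InnerProductSpace ℂ H]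
    (u v : H) : H →ₗ[ℂ] H where
  toFun w := (inner ℂ v w : ℂ) • u
  map_add' x y := by simp [inner_add_right, add_smul]
  map_smul' c x := by simp [inner_smul_right, smul_smul]

open scoped InnerProductSpace Matrix

namespace Matrix

theorem mul_eq_smul_one_comm_of_equiv {m n K : Type*} [Fintype m] [Fintype n] [DecidableEq m]
    [DecidableEq n] [Field K] {A : Matrix m n K} {B : Matrix n m K} (e : m ≃ n) {s : K}
    (hs : s ≠ 0) : A * B = s • 1 ↔ B * A = s • 1 := by
  rw [← inv_smul_eq_iff₀ hs, ← inv_smul_eq_iff₀ hs, ← Matrix.mul_smul, ← Matrix.smul_mul]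
  exact mul_eq_one_comm_of_equiv e

variable {ι n 𝕜 : Type*} [Fintype n] [RCLike 𝕜]

def weightedVec (X : ι → Matrix n n 𝕜) (w : n → ℝ) : Matrix (n × n) ι 𝕜 :=
  fun p a => (w p.2 : 𝕜) * X a p.1 p.2

theorem conjTranspose_weightedVec_mul_self_apply (X : ι → Matrix n n 𝕜) (w : n → ℝ) (a b : ι) :
    ((weightedVec X w)ᴴ * weightedVec X w) a b
      = ∑ j, ((w j ^ 2 : ℝ) : 𝕜) * ((X a)ᴴ * X b) j j := by
  simp only [mul_apply, conjTranspose_apply, weightedVec, Fintype.sum_prod_type_right,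
    Finset.mul_sum, star_mul', RCLike.star_def, RCLike.conj_ofReal]
  refine Finset.sum_congr rfl fun j _ => Finset.sum_congr rfl fun k _ => ?_
  push_cast
  ring

theorem sum_weightedVec_mul_conjTranspose_apply [Fintype ι] (X : ι → Matrix n n 𝕜)
    (w : n → ℝ) (i j : n) :
    ∑ k, (weightedVec X w * (weightedVec X w)ᴴ) (k, j) (k, i)
      = (w i : 𝕜) * w j * (∑ a, (X a)ᴴ * X a) i j := by
  simp only [mul_apply, conjTranspose_apply, weightedVec, Matrix.sum_apply,
    Finset.mul_sum, star_mul', RCLike.star_def, RCLike.conj_ofReal]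
  rw [Finset.sum_comm]
  refine Finset.sum_congr rfl fun a _ => Finset.sum_congr rfl fun k _ => ?_
  ring

theorem sum_conjTranspose_mul_self_eq_diagonal [Fintype ι] [DecidableEq ι] [DecidableEq n]
    (X : ι → Matrix n n 𝕜) (e : ι ≃ n × n) {w : n → ℝ} (hw : ∀ j, w j ≠ 0) {s : 𝕜}
    (hs : s ≠ 0)
    (hX : ∀ a b, ∑ j, ((w j ^ 2 : ℝ) : 𝕜) * ((X a)ᴴ * X b) j j = if a = b then s else 0) :
    ∑ a, (X a)ᴴ * X a = diagonal fun j => (Fintype.card n : 𝕜) * s / ((w j ^ 2 : ℝ) : 𝕜) := by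
  have hgram : (weightedVec X w)ᴴ * weightedVec X w = s • 1 := by
    ext a b
    rw [conjTranspose_weightedVec_mul_self_apply, hX, smul_apply, one_apply, smul_ite,
      smul_eq_mul, mul_one, smul_zero]
  have hcompl := (mul_eq_smul_one_comm_of_equiv e hs).1 hgram
  ext i j
  have hij := sum_weightedVec_mul_conjTranspose_apply X w i j
  rw [hcompl] at hij
  simp only [smul_apply, one_apply, Prod.mk.injEq, true_and, smul_eq_mul] at hij
  rw [Finset.sum_const, Finset.card_univ, nsmul_eq_mul] at hij
  have hw' : ∀ k, (w k : 𝕜) ≠ 0 := fun k => RCLike.ofReal_ne_zero.2 (hw k)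
  rw [diagonal_apply]
  obtain rfl | h := eq_or_ne i j
  · rw [if_pos rfl, mul_one] at hij
    rw [if_pos rfl, eq_div_iff (by simpa using hw' i), hij]
    push_cast
    ring
  · rw [if_neg h.symm, mul_zero, mul_zero] at hij
    simpa [h, hw'] using hij.symm

end Matrix

namespace LinearMap

theorem toMatrixOrthonormal_adjoint_comp {𝕜 E n : Type*} [RCLike 𝕜] [NormedAddCommGroup E]
    [InnerProductSpace 𝕜 E] [FiniteDimensional 𝕜 E] [Fintype n] [DecidableEq n]
    (φ : OrthonormalBasis n 𝕜 E) (A B : E →ₗ[𝕜] E) :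
    toMatrixOrthonormal φ (adjoint A ∘ₗ B)
      = (toMatrixOrthonormal φ A)ᴴ * toMatrixOrthonormal φ B := by
  rw [← star_eq_adjoint, ← Module.End.mul_eq_comp, map_mul, map_star, Matrix.star_eq_conjTranspose]

theorem toMatrixOrthonormal_rankOne {H n : Type*} [NormedAddCommGroup H]
    [InnerProductSpace ℂ H] [FiniteDimensional ℂ H] [Fintype n] [DecidableEq n]
    (φ : OrthonormalBasis n ℂ H) (i j : n) :
    toMatrixOrthonormal φ (rankOne (φ i) (φ j)) = Matrix.single i j 1 := by
  ext k l
  rw [toMatrixOrthonormal_apply_apply, Matrix.single_apply]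
  change ⟪φ k, ⟪φ j, φ l⟫_ℂ • φ i⟫_ℂ = _
  rw [inner_smul_right, φ.inner_eq_ite, φ.inner_eq_ite]
  grind

end LinearMap

theorem sum_adjoint_comp_of_Sc_orthogonal_general
    {H : Type*} [NormedAddCommGroup H] [InnerProductSpace ℂ H] [FiniteDimensional ℂ H]
    (d : ℕ) (hd : 1 ≤ d)
    (φ : OrthonormalBasis (Fin d) ℂ H)
    (η : Fin d → ℝ) (hη : ∀ j, 0 < η j)
    (α : ℝ) (hα : 0 < α)
    (L : Fin (d ^ 2) → (H →ₗ[ℂ] H))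
    (horth : ∀ a a' : Fin (d ^ 2),
      (d : ℂ) * ∑ j, ((η j ^ 2 : ℝ) : ℂ) *
        (inner ℂ (φ j) ((LinearMap.adjoint (L a) ∘ₗ L a') (φ j)) : ℂ)
      = if a = a' then (α : ℂ) else 0) :
    ∑ a, LinearMap.adjoint (L a) ∘ₗ L a
      = ∑ j, ((α / η j ^ 2 : ℝ) : ℂ) • rankOne (φ j) (φ j) := by
  have hd0 : (d : ℂ) ≠ 0 := by exact_mod_cast (by omega : d ≠ 0)
  have hgram : ∀ a b, ∑ j, ((η j ^ 2 : ℝ) : ℂ) *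
      ((LinearMap.toMatrixOrthonormal φ (L a))ᴴ * LinearMap.toMatrixOrthonormal φ (L b)) j j
      = if a = b then (α / d : ℂ) else 0 := by
    intro a b
    have h := horth a b
    simp_rw [← LinearMap.toMatrixOrthonormal_apply_apply,
      LinearMap.toMatrixOrthonormal_adjoint_comp] at h
    simpa only [ite_div, zero_div] using eq_div_of_mul_eq hd0 ((mul_comm _ _).trans h)
  have hdiag := Matrix.sum_conjTranspose_mul_self_eq_diagonal _
    ((finCongr (sq d)).trans finProdFinEquiv.symm) (fun j => (hη j).ne')
    (div_ne_zero (by exact_mod_cast hα.ne') hd0) hgram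
  apply EquivLike.injective (LinearMap.toMatrixOrthonormal φ)
  simp only [map_sum, map_smul, LinearMap.toMatrixOrthonormal_adjoint_comp,
    LinearMap.toMatrixOrthonormal_rankOne, Matrix.smul_single, smul_eq_mul, mul_one,
    Matrix.sum_single_eq_diagonal, hdiag, Fintype.card_fin]
  congr 1
  ext j
  rw [mul_div_cancel₀ _ hd0, Complex.ofReal_div, ← Complex.coe_algebraMap]

/-- Lemma 1 of the paper (general form): if `L_1, …, L_{d²}` are operators on a
`d`-dimensional complex Hilbert space `H` that are orthogonal with squared norm `α`
for the inner product `⟨A,B⟩_Sc := d ∑_j η_j² ⟨φ_j, A†B φ_j⟩` determined by the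
orthonormal basis `{φ_j}` and the positive weights `η_j` with `∑_j η_j² = 1`, then
`∑_a L_a† L_a = ∑_j (α/η_j²) |φ_j⟩⟨φ_j|`. -/
theorem sum_adjoint_comp_of_Sc_orthogonal
    {H : Type*} [NormedAddCommGroup H] [InnerProductSpace ℂ H] [FiniteDimensional ℂ H]
    (d : ℕ) (hd : 1 ≤ d) (hdim : Module.finrank ℂ H = d)
    (φ : OrthonormalBasis (Fin d) ℂ H)
    (η : Fin d → ℝ) (hη : ∀ j, 0 < η j) (hη1 : ∑ j, η j ^ 2 = 1)
    (α : ℝ) (hα : 0 < α)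
    (L : Fin (d ^ 2) → (H →ₗ[ℂ] H))
    (horth : ∀ a a' : Fin (d ^ 2),
      (d : ℂ) * ∑ j, ((η j ^ 2 : ℝ) : ℂ) *
        (inner ℂ (φ j) ((LinearMap.adjoint (L a) ∘ₗ L a') (φ j)) : ℂ)
      = if a = a' then (α : ℂ) else 0) :
    ∑ a, LinearMap.adjoint (L a) ∘ₗ L a
      = ∑ j, ((α / η j ^ 2 : ℝ) : ℂ) • rankOne (φ j) (φ j) :=
  sum_adjoint_comp_of_Sc_orthogonal_general d hd φ η hη α hα L horth
end

section
/- Let H be a d-dimensional complex Hilbert space (d ≥ 1) and α > 0. If L_1,…,L_{d²} are linear operators on H satisfying tr(L_a† L_{a'}) = α·δ_{aa'} for all a, a' ∈ {1,…,d²} (i.e., they form an orthogonal family of size d² for the Hilbert–Schmidt inner product, each of squared norm α), then Σ_{a=1}^{d²} L_a† L_a = α·d·𝕀, where 𝕀 is the identity operator on H. -/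
/-!
The `L a` are `d²` orthogonal vectors of norm² `α` in the `d²`-dimensional space `End H` with the
Hilbert–Schmidt inner product, hence (up to the factor `α`) an orthonormal basis of it, so
`∑ a, ⟨L a, X⟩ L a = α X` for every `X`. Taking `X = |u⟩⟨v|` gives
`∑ a, ⟪L a v, u⟫ L a w = α ⟪v, w⟫ u`, and summing `⟪e i, ·⟫` of this over an orthonormal basis `e`
of `H` (with `u = e i`) evaluates `∑ a, ⟪L a x, L a y⟫ = ∑ a ∑ i, ⟪L a x, e i⟫ ⟪e i, L a y⟫` to
`α d ⟪x, y⟫`.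
-/

open Module InnerProductSpace

theorem Module.sum_dual_apply_smul_eq_self_of_card_eq_finrank
    {K V ι : Type*} [Field K] [AddCommGroup V] [Module K V] [FiniteDimensional K V] [Fintype ι]
    [DecidableEq ι] (v : ι → V) (f : ι → Dual K V) (hcard : Fintype.card ι = finrank K V)
    (hfv : ∀ a b, f a (v b) = if a = b then 1 else 0) (x : V) :
    ∑ a, f a x • v a = x := by
  have hv : LinearIndependent K v :=
    .of_pairwise_dual_eq_zero_one v f (fun a b hab => by simp [hfv, hab]) (by simp [hfv])
  suffices ∑ a, (f a).smulRight (v a) = LinearMap.id by simpa using congr($this x)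
  refine LinearMap.ext_on_range (hv.span_eq_top_of_card_eq_finrank' hcard) fun b => ?_
  simp [hfv]

namespace LinearMap

variable {𝕜 H ι : Type*} [RCLike 𝕜] [NormedAddCommGroup H] [InnerProductSpace 𝕜 H]
  [FiniteDimensional 𝕜 H]

theorem trace_adjoint_comp_smulRight_innerₛₗ (A : H →ₗ[𝕜] H) (u v : H) :
    trace 𝕜 H (adjoint A ∘ₗ (innerₛₗ 𝕜 v).smulRight u) = ⟪A v, u⟫_𝕜 := by
  have : adjoint A ∘ₗ (innerₛₗ 𝕜 v).smulRight u = (innerₛₗ 𝕜 v).smulRight (adjoint A u) := by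
    ext
    simp
  rw [this, trace_smulRight, innerₛₗ_apply_apply, adjoint_inner_right]

variable [Fintype ι] [DecidableEq ι]

theorem sum_trace_adjoint_comp_smul_eq_of_card_eq_finrank_sq (L : ι → (H →ₗ[𝕜] H))
    (hcard : Fintype.card ι = finrank 𝕜 H ^ 2) {c : 𝕜} (hc : c ≠ 0)
    (horth : ∀ a b, trace 𝕜 H (adjoint (L a) ∘ₗ L b) = if a = b then c else 0)
    (X : H →ₗ[𝕜] H) :
    ∑ a, trace 𝕜 H (adjoint (L a) ∘ₗ X) • L a = c • X := by
  have hbasis := Module.sum_dual_apply_smul_eq_self_of_card_eq_finrank L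
    (fun a => c⁻¹ • (trace 𝕜 H ∘ₗ mulLeft 𝕜 (adjoint (L a))))
    (by rw [hcard, finrank_linearMap, sq])
    (fun a b => by simp [Module.End.mul_eq_comp, horth, hc]) X
  simpa [Finset.smul_sum, smul_smul, hc, Module.End.mul_eq_comp] using congr(c • $hbasis)

theorem sum_adjoint_comp_self_eq_smul_id_of_card_eq_finrank_sq (L : ι → (H →ₗ[𝕜] H))
    (hcard : Fintype.card ι = finrank 𝕜 H ^ 2) {c : 𝕜} (hc : c ≠ 0)
    (horth : ∀ a b, trace 𝕜 H (adjoint (L a) ∘ₗ L b) = if a = b then c else 0) :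
    ∑ a, adjoint (L a) ∘ₗ L a = (c * finrank 𝕜 H) • LinearMap.id := by
  let e := stdOrthonormalBasis 𝕜 H
  have hcomplete (u v w : H) : ∑ a, ⟪L a v, u⟫_𝕜 • L a w = (c * ⟪v, w⟫_𝕜) • u := by
    have := congr($(sum_trace_adjoint_comp_smul_eq_of_card_eq_finrank_sq L hcard hc horth
      ((innerₛₗ 𝕜 v).smulRight u)) w)
    simpa [trace_adjoint_comp_smulRight_innerₛₗ, mul_smul] using this
  ext y
  refine ext_inner_left 𝕜 fun x => ?_
  calc ⟪x, (∑ a, adjoint (L a) ∘ₗ L a) y⟫_𝕜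
      = ∑ a, ∑ i, ⟪L a x, e i⟫_𝕜 * ⟪e i, L a y⟫_𝕜 := by
        simp [inner_sum, adjoint_inner_right, e.sum_inner_mul_inner]
    _ = ∑ i, ⟪e i, ∑ a, ⟪L a x, e i⟫_𝕜 • L a y⟫_𝕜 := by
        rw [Finset.sum_comm]
        simp [inner_sum, inner_smul_right]
    _ = ∑ _i : Fin (finrank 𝕜 H), c * ⟪x, y⟫_𝕜 := by simp [hcomplete, inner_smul_right]
    _ = ⟪x, ((c * finrank 𝕜 H) • LinearMap.id : H →ₗ[𝕜] H) y⟫_𝕜 := by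
        simp only [Finset.sum_const, Finset.card_univ, Fintype.card_fin, nsmul_eq_mul,
          smul_apply, id_apply, inner_smul_right]
        ring

end LinearMap

theorem sum_adjoint_comp_of_HS_orthogonal_general
    {H : Type*} [NormedAddCommGroup H] [InnerProductSpace ℂ H] [FiniteDimensional ℂ H]
    (d : ℕ) (hdim : Module.finrank ℂ H = d)
    (α : ℝ) (hα : 0 < α)
    (L : Fin (d ^ 2) → (H →ₗ[ℂ] H))
    (horth : ∀ a a' : Fin (d ^ 2),
      LinearMap.trace ℂ H (LinearMap.adjoint (L a) ∘ₗ L a')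
        = if a = a' then (α : ℂ) else 0) :
    ∑ a, LinearMap.adjoint (L a) ∘ₗ L a = ((α * d : ℝ) : ℂ) • LinearMap.id := by
  subst hdim
  rw [LinearMap.sum_adjoint_comp_self_eq_smul_id_of_card_eq_finrank_sq L (Fintype.card_fin _)
    (by exact_mod_cast hα.ne') horth]
  push_cast
  rfl

/-- Lemma 1 of the paper (maximally entangled case): if `L_1, …, L_{d²}` are linear
operators on a `d`-dimensional complex Hilbert space forming an orthogonal family of
size `d²` for the Hilbert–Schmidt inner product `⟨A,B⟩_HS = tr(A†B)`, each of squared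
norm `α > 0`, then `∑_a L_a† L_a = α d 𝕀`. -/
theorem sum_adjoint_comp_of_HS_orthogonal
    {H : Type*} [NormedAddCommGroup H] [InnerProductSpace ℂ H] [FiniteDimensional ℂ H]
    (d : ℕ) (hd : 1 ≤ d) (hdim : Module.finrank ℂ H = d)
    (α : ℝ) (hα : 0 < α)
    (L : Fin (d ^ 2) → (H →ₗ[ℂ] H))
    (horth : ∀ a a' : Fin (d ^ 2),
      LinearMap.trace ℂ H (LinearMap.adjoint (L a) ∘ₗ L a')
        = if a = a' then (α : ℂ) else 0) :
    ∑ a, LinearMap.adjoint (L a) ∘ₗ L a = ((α * d : ℝ) : ℂ) • LinearMap.id :=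
  sum_adjoint_comp_of_HS_orthogonal_general d hdim α hα L horth
end

section
/- Let H_A and H_K be finite-dimensional complex Hilbert spaces, C a subspace of H_A ⊗ H_K with orthogonal projection P onto C, and L_1,…,L_l linear operators on H_K satisfying P(𝕀_A ⊗ L_a)†(𝕀_A ⊗ L_{a'})P = λ_a δ_{aa'} P for some reals λ_a ≥ 0 and all a, a'. Let M and M' be linear operators on H_K and X, X' ⊆ {1,…,l} disjoint sets such that (𝕀_A ⊗ M)v = Σ_{a ∈ X} f_a (𝕀_A ⊗ L_a)v and (𝕀_A ⊗ M')v = Σ_{a ∈ X'} f'_a (𝕀_A ⊗ L_a)v for all v ∈ C, with f_a, f'_a ∈ ℂ. Then the post-measurement subspaces are orthogonal: ⟨(𝕀_A ⊗ M)v, (𝕀_A ⊗ M')w⟩ = 0 for all v, w ∈ C. -/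
/-!
For `v, w ∈ C` one has `⟪L_a v, L_{a'} w⟫ = ⟪v, P L_a† L_{a'} P w⟫`, which vanishes for `a ≠ a'`
by (c3). Expanding `M v` and `M' w` by (c1), the inner product becomes a sum of such terms
over pairs `(a, a') ∈ X × X'`, all with `a ≠ a'` by (c2).
-/

/-- The operator `𝕀_A ⊗ L` on `H_A ⊗ H_K ≅ ℂ^(dA × dK)`, acting as the identity on the
first tensor factor and as the matrix `L` on the second. -/
noncomputable def idTensorK {dA dK : ℕ} (L : Matrix (Fin dK) (Fin dK) ℂ) :
    EuclideanSpace ℂ (Fin dA × Fin dK) →ₗ[ℂ] EuclideanSpace ℂ (Fin dA × Fin dK) :=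
  Matrix.toEuclideanLin (Matrix.of fun p q : Fin dA × Fin dK =>
    (if p.1 = q.1 then (1 : ℂ) else 0) * L p.2 q.2)

/-- The orthogonal projection of `H_A ⊗ H_K` onto the subspace `C`, as an operator on
the whole space. -/
noncomputable def projOnto {dA dK : ℕ} (C : Submodule ℂ (EuclideanSpace ℂ (Fin dA × Fin dK))) :
    EuclideanSpace ℂ (Fin dA × Fin dK) →ₗ[ℂ] EuclideanSpace ℂ (Fin dA × Fin dK) :=
  C.subtype ∘ₗ (C.orthogonalProjectionOnto : _ →L[ℂ] C).toLinearMap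

open scoped InnerProductSpace

section
variable {𝕜 E : Type*} [RCLike 𝕜] [NormedAddCommGroup E] [InnerProductSpace 𝕜 E]

theorem Submodule.inner_map_map_eq_zero_of_compression_eq_zero [FiniteDimensional 𝕜 E]
    (K : Submodule 𝕜 E) {T S : E →ₗ[𝕜] E}
    (h : K.starProjection.toLinearMap ∘ₗ LinearMap.adjoint T ∘ₗ S ∘ₗ
      K.starProjection.toLinearMap = 0)
    {v w : E} (hv : v ∈ K) (hw : w ∈ K) : ⟪T v, S w⟫_𝕜 = 0 := by
  have hcompression : K.starProjection (LinearMap.adjoint T (S w)) = 0 := by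
    simpa [K.starProjection_eq_self_iff.2 hw] using LinearMap.congr_fun h w
  calc ⟪T v, S w⟫_𝕜 = ⟪K.starProjection v, LinearMap.adjoint T (S w)⟫_𝕜 := by
        rw [LinearMap.adjoint_inner_right, K.starProjection_eq_self_iff.2 hv]
    _ = 0 := by rw [K.inner_starProjection_left_eq_right, hcompression, inner_zero_right]

theorem inner_sum_smul_sum_smul_eq_zero {ι : Type*} {s t : Finset ι} {u w : ι → E}
    (c d : ι → 𝕜) (h : ∀ a ∈ s, ∀ b ∈ t, ⟪u a, w b⟫_𝕜 = 0) :
    ⟪∑ a ∈ s, c a • u a, ∑ b ∈ t, d b • w b⟫_𝕜 = 0 := by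
  rw [sum_inner]
  refine Finset.sum_eq_zero fun a ha => ?_
  rw [inner_sum]
  refine Finset.sum_eq_zero fun b hb => ?_
  rw [inner_smul_left, inner_smul_right, h a ha b hb, mul_zero, mul_zero]

end

theorem post_measurement_subspaces_orthogonal_general
    (dA dK l : ℕ)
    (C : Submodule ℂ (EuclideanSpace ℂ (Fin dA × Fin dK)))
    (L : Fin l → Matrix (Fin dK) (Fin dK) ℂ)
    (lam : Fin l → ℝ)
    (horth : ∀ a a' : Fin l,
      projOnto C ∘ₗ LinearMap.adjoint (idTensorK (dA := dA) (L a)) ∘ₗ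
          idTensorK (dA := dA) (L a') ∘ₗ projOnto C
        = if a = a' then ((lam a : ℝ) : ℂ) • projOnto C else 0)
    (M M' : Matrix (Fin dK) (Fin dK) ℂ)
    (X X' : Finset (Fin l)) (hXX' : X ∩ X' = ∅)
    (f f' : Fin l → ℂ)
    (hdec : ∀ v ∈ C, idTensorK (dA := dA) M v = ∑ a ∈ X, f a • idTensorK (dA := dA) (L a) v)
    (hdec' : ∀ v ∈ C, idTensorK (dA := dA) M' v = ∑ a ∈ X', f' a • idTensorK (dA := dA) (L a) v) :
    ∀ v ∈ C, ∀ w ∈ C,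
      (inner ℂ (idTensorK (dA := dA) M v) (idTensorK (dA := dA) M' w) : ℂ) = 0 := by
  intro v hv w hw
  have hdisj : Disjoint X X' := Finset.disjoint_iff_inter_eq_empty.2 hXX'
  rw [hdec v hv, hdec' w hw]
  refine inner_sum_smul_sum_smul_eq_zero f f' fun a ha a' ha' => ?_
  have hne : a ≠ a' := fun h => Finset.disjoint_left.1 hdisj ha (h ▸ ha')
  have hcompression := horth a a'
  rw [if_neg hne] at hcompression
  exact C.inner_map_map_eq_zero_of_compression_eq_zero hcompression hv hw

/-- Theorem 2 of the paper (orthogonality of post-measurement subspaces): under the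
orthogonality condition (c3) `P (𝕀_A ⊗ L_a)† (𝕀_A ⊗ L_{a'}) P = λ_a δ_{aa'} P` on the
code `C`, if two measurement operators `M, M'` decompose on `C` over disjoint index
sets `X, X'` (conditions (c1) and (c2)), then `⟨(𝕀_A ⊗ M) v, (𝕀_A ⊗ M') w⟩ = 0` for
all `v, w ∈ C`. -/
theorem post_measurement_subspaces_orthogonal
    (dA dK l : ℕ)
    (C : Submodule ℂ (EuclideanSpace ℂ (Fin dA × Fin dK)))
    (L : Fin l → Matrix (Fin dK) (Fin dK) ℂ)
    (lam : Fin l → ℝ) (hlam : ∀ a, 0 ≤ lam a)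
    (horth : ∀ a a' : Fin l,
      projOnto C ∘ₗ LinearMap.adjoint (idTensorK (dA := dA) (L a)) ∘ₗ
          idTensorK (dA := dA) (L a') ∘ₗ projOnto C
        = if a = a' then ((lam a : ℝ) : ℂ) • projOnto C else 0)
    (M M' : Matrix (Fin dK) (Fin dK) ℂ)
    (X X' : Finset (Fin l)) (hXX' : X ∩ X' = ∅)
    (f f' : Fin l → ℂ)
    (hdec : ∀ v ∈ C, idTensorK (dA := dA) M v = ∑ a ∈ X, f a • idTensorK (dA := dA) (L a) v)
    (hdec' : ∀ v ∈ C, idTensorK (dA := dA) M' v = ∑ a ∈ X', f' a • idTensorK (dA := dA) (L a) v) :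
    ∀ v ∈ C, ∀ w ∈ C,
      (inner ℂ (idTensorK (dA := dA) M v) (idTensorK (dA := dA) M' w) : ℂ) = 0 :=
  post_measurement_subspaces_orthogonal_general dA dK l C L lam horth M M' X X' hXX' f f' hdec hdec'
end

section
/- Let H be a d-dimensional complex Hilbert space with orthonormal basis {φ_j}_{j=1}^d, η_1,…,η_d positive reals with Σ_j η_j² = 1, and set α := min_j η_j². If L_1,…,L_{d²} are linear operators on H satisfying ⟨L_a, L_{a'}⟩_Sc = α·δ_{aa'} for all a, a', then Σ_{a=1}^{d²} L_a† L_a ≤ 𝕀 in the positive semidefinite (Loewner) order; moreover, if η_j = 1/√d for all j (so α = 1/d), then Σ_{a=1}^{d²} L_a† L_a = 𝕀, i.e., (L_a)_a is a trace-preserving quantum operation. -/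
/-!
With weights `wⱼ = d ηⱼ² / α`, the hypothesis says that the `d²` vectors `uₐ = (√wⱼ • Lₐ φⱼ)ⱼ`
of `⨁ⱼ H` are orthonormal. Since `⨁ⱼ H` has dimension `d²`, they form an orthonormal basis, and
taking the trace of the `(j, k)` block of `∑ₐ |uₐ⟩⟨uₐ| = 1` gives
`∑ₐ ⟪Lₐ φₖ, Lₐ φⱼ⟫ = δⱼₖ d / wⱼ`. Hence `∑ₐ Lₐ† Lₐ` is diagonal in `φ` with eigenvalues
`α / ηⱼ² ≤ 1`, all equal to `1` when every `ηⱼ² = 1/d`.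
-/

open scoped ComplexOrder InnerProductSpace

section

variable {𝕜 : Type*} [RCLike 𝕜]

namespace PiLp

variable {ι : Type*} [Fintype ι] [DecidableEq ι] {β : ι → Type*}
  [∀ i, NormedAddCommGroup (β i)] [∀ i, InnerProductSpace 𝕜 (β i)]

theorem inner_single_left (i : ι) (x : β i) (u : PiLp 2 β) :
    ⟪PiLp.single 2 i x, u⟫_𝕜 = ⟪x, u i⟫_𝕜 := by
  rw [PiLp.inner_apply, Finset.sum_eq_single i (fun j _ hj => by simp [hj]) (by simp)]
  simp

theorem inner_single_right (i : ι) (x : β i) (u : PiLp 2 β) :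
    ⟪u, PiLp.single 2 i x⟫_𝕜 = ⟪u i, x⟫_𝕜 := by
  rw [← inner_conj_symm, inner_single_left, inner_conj_symm]

end PiLp

variable {E : Type*} [NormedAddCommGroup E] [InnerProductSpace 𝕜 E]

theorem OrthonormalBasis.inner_apply_nonneg_of_apply_eq_smul {ι : Type*} [Fintype ι]
    (φ : OrthonormalBasis ι 𝕜 E) (T : E →ₗ[𝕜] E) (μ : ι → ℝ) (hμ : ∀ j, 0 ≤ μ j)
    (hT : ∀ j, T (φ j) = (μ j : 𝕜) • φ j) (v : E) : 0 ≤ ⟪v, T v⟫_𝕜 := by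
  nth_rw 2 [← φ.sum_repr' v]
  simp only [map_sum, map_smul, hT, inner_sum, smul_smul, inner_smul_right]
  refine Finset.sum_nonneg fun j _ => ?_
  rw [← inner_conj_symm v, mul_comm, ← mul_assoc]
  exact mul_nonneg (star_mul_self_nonneg _) (RCLike.ofReal_nonneg.mpr (hμ j))

section FiniteDimensional

variable [FiniteDimensional 𝕜 E]

theorem PiLp.finrank_const (ι : Type*) [Fintype ι] :
    Module.finrank 𝕜 (PiLp 2 (fun _ : ι => E)) = Fintype.card ι * Module.finrank 𝕜 E := by
  rw [(WithLp.linearEquiv 2 𝕜 (ι → E)).finrank_eq, Module.finrank_pi_fintype]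
  simp

theorem Orthonormal.sum_inner_mul_inner_of_card_eq_finrank {κ : Type*} [Fintype κ]
    {v : κ → E} (hv : Orthonormal 𝕜 v) (hcard : Fintype.card κ = Module.finrank 𝕜 E) (x y : E) :
    ∑ a, ⟪x, v a⟫_𝕜 * ⟪v a, y⟫_𝕜 = ⟪x, y⟫_𝕜 := by
  simpa using (OrthonormalBasis.mk hv
    (hv.linearIndependent.span_eq_top_of_card_eq_finrank' hcard).ge).sum_inner_mul_inner x y

theorem Orthonormal.sum_inner_apply_apply_of_card_eq_finrank {ι κ : Type*} [Fintype ι]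
    [DecidableEq ι] [Fintype κ] {u : κ → PiLp 2 (fun _ : ι => E)} (hu : Orthonormal 𝕜 u)
    (hcard : Fintype.card κ = Fintype.card ι * Module.finrank 𝕜 E) (j k : ι) :
    ∑ a, ⟪u a j, u a k⟫_𝕜 = if j = k then (Module.finrank 𝕜 E : 𝕜) else 0 := by
  let φ := stdOrthonormalBasis 𝕜 E
  let e (i : ι) (x : E) : PiLp 2 (fun _ : ι => E) := PiLp.single 2 i x
  calc ∑ a, ⟪u a j, u a k⟫_𝕜
      = ∑ m, ∑ a, ⟪e k (φ m), u a⟫_𝕜 * ⟪u a, e j (φ m)⟫_𝕜 := by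
        rw [Finset.sum_comm]
        refine Finset.sum_congr rfl fun a _ => ?_
        simp only [e, PiLp.inner_single_left, PiLp.inner_single_right, mul_comm ⟪φ _, _⟫_𝕜]
        exact (φ.sum_inner_mul_inner _ _).symm
    _ = ∑ m, ⟪e k (φ m), e j (φ m)⟫_𝕜 := by
        simp only [hu.sum_inner_mul_inner_of_card_eq_finrank
          (hcard.trans (PiLp.finrank_const ι).symm)]
    _ = _ := by
        by_cases hjk : j = k
        · simp [e, hjk]
        · simp [e, PiLp.inner_single_left, Ne.symm hjk, hjk]

theorem sum_inner_of_weighted_orthonormal {ι κ : Type*} [Fintype ι] [DecidableEq ι]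
    [Fintype κ] [DecidableEq κ] (v : κ → ι → E) (w : ι → ℝ) (hw : ∀ j, 0 < w j)
    (hcard : Fintype.card κ = Fintype.card ι * Module.finrank 𝕜 E)
    (horth : ∀ a b, ∑ j, (w j : 𝕜) * ⟪v a j, v b j⟫_𝕜 = if a = b then 1 else 0) (j k : ι) :
    ∑ a, ⟪v a j, v a k⟫_𝕜 = if j = k then ((Module.finrank 𝕜 E / w j : ℝ) : 𝕜) else 0 := by
  let u (a : κ) : PiLp 2 (fun _ : ι => E) := WithLp.toLp 2 fun j => (√(w j) : 𝕜) • v a j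
  have hu : Orthonormal 𝕜 u := by
    rw [orthonormal_iff_ite]
    intro a b
    rw [← horth a b, PiLp.inner_apply]
    refine Finset.sum_congr rfl fun i _ => ?_
    simp only [u, inner_smul_left, inner_smul_right, RCLike.conj_ofReal, ← mul_assoc,
      ← RCLike.ofReal_mul, Real.mul_self_sqrt (hw i).le]
  have key := hu.sum_inner_apply_apply_of_card_eq_finrank hcard j k
  simp only [u, inner_smul_left, inner_smul_right, RCLike.conj_ofReal, ← Finset.mul_sum] at key
  split_ifs at key ⊢ with hjk
  · subst hjk
    rw [← mul_assoc, ← RCLike.ofReal_mul, Real.mul_self_sqrt (hw j).le] at key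
    rw [RCLike.ofReal_div, RCLike.ofReal_natCast, ← key, mul_div_cancel_left₀]
    exact RCLike.ofReal_ne_zero.mpr (hw j).ne'
  · simpa [Real.sqrt_eq_zero', (hw j).not_ge, (hw k).not_ge] using key

theorem OrthonormalBasis.sum_adjoint_comp_apply_of_weighted_orthonormal {ι κ : Type*}
    [Fintype ι] [DecidableEq ι] [Fintype κ] [DecidableEq κ] (φ : OrthonormalBasis ι 𝕜 E)
    (w : ι → ℝ) (hw : ∀ j, 0 < w j) (L : κ → E →ₗ[𝕜] E)
    (hcard : Fintype.card κ = Fintype.card ι * Fintype.card ι)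
    (horth : ∀ a b, ∑ j, (w j : 𝕜) * ⟪L a (φ j), L b (φ j)⟫_𝕜 = if a = b then 1 else 0)
    (j : ι) :
    (∑ a, LinearMap.adjoint (L a) ∘ₗ L a) (φ j) = ((Fintype.card ι / w j : ℝ) : 𝕜) • φ j := by
  have hrank : Module.finrank 𝕜 E = Fintype.card ι := Module.finrank_eq_card_basis φ.toBasis
  refine InnerProductSpace.ext_inner_left_basis φ.toBasis fun k => ?_
  rw [OrthonormalBasis.coe_toBasis, inner_smul_right, φ.inner_eq_ite, ← hrank]
  simp only [LinearMap.sum_apply, LinearMap.comp_apply, inner_sum, LinearMap.adjoint_inner_right]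
  rw [sum_inner_of_weighted_orthonormal (fun a i => L a (φ i)) w hw (by rw [hcard, hrank]) horth]
  split_ifs with h <;> simp [h]

theorem OrthonormalBasis.sum_adjoint_comp_apply_of_Sc_orthogonal {ι κ : Type*}
    [Fintype ι] [DecidableEq ι] [Fintype κ] [DecidableEq κ] (φ : OrthonormalBasis ι 𝕜 E)
    (η : ι → ℝ) (hη : ∀ j, 0 < η j) {α : ℝ} (hα : 0 < α) (L : κ → E →ₗ[𝕜] E)
    (hcard : Fintype.card κ = Fintype.card ι ^ 2)
    (horth : ∀ a b, (Fintype.card ι : 𝕜) * ∑ j, ((η j ^ 2 : ℝ) : 𝕜) *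
        ⟪φ j, (LinearMap.adjoint (L a) ∘ₗ L b) (φ j)⟫_𝕜 = if a = b then (α : 𝕜) else 0)
    (j : ι) :
    (∑ a, LinearMap.adjoint (L a) ∘ₗ L a) (φ j) = ((α / η j ^ 2 : ℝ) : 𝕜) • φ j := by
  have : Nonempty ι := ⟨j⟩
  let w (i : ι) : ℝ := Fintype.card ι * η i ^ 2 / α
  have hw (i : ι) : 0 < w i := by have := hη i; positivity
  have hw_orth (a b : κ) :
      ∑ i, (w i : 𝕜) * ⟪L a (φ i), L b (φ i)⟫_𝕜 = if a = b then 1 else 0 := by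
    have hα0 : (α : 𝕜) ≠ 0 := RCLike.ofReal_ne_zero.mpr hα.ne'
    calc ∑ i, (w i : 𝕜) * ⟪L a (φ i), L b (φ i)⟫_𝕜
        = (α : 𝕜)⁻¹ * ((Fintype.card ι : 𝕜) * ∑ i, ((η i ^ 2 : ℝ) : 𝕜) *
            ⟪φ i, (LinearMap.adjoint (L a) ∘ₗ L b) (φ i)⟫_𝕜) := by
          simp only [LinearMap.comp_apply, LinearMap.adjoint_inner_right, Finset.mul_sum]
          refine Finset.sum_congr rfl fun i _ => ?_
          push_cast [w]
          ring
      _ = if a = b then 1 else 0 := by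
          rw [horth]
          split_ifs <;> simp [hα0]
  have hcoef : (Fintype.card ι : ℝ) / w j = α / η j ^ 2 := by
    have := (hη j).ne'
    simp only [w]
    field_simp
  rw [φ.sum_adjoint_comp_apply_of_weighted_orthonormal w hw L (by rw [hcard, sq]) hw_orth j,
    hcoef]

end FiniteDimensional

end

theorem sum_adjoint_comp_le_one_of_Sc_orthogonal_general
    {H : Type*} [NormedAddCommGroup H] [InnerProductSpace ℂ H] [FiniteDimensional ℂ H]
    (d : ℕ) (hd : 1 ≤ d)
    (φ : OrthonormalBasis (Fin d) ℂ H)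
    (η : Fin d → ℝ) (hη : ∀ j, 0 < η j)
    (α : ℝ) (hα : α = ⨅ j, η j ^ 2)
    (L : Fin (d ^ 2) → (H →ₗ[ℂ] H))
    (horth : ∀ a a' : Fin (d ^ 2),
      (d : ℂ) * ∑ j, ((η j ^ 2 : ℝ) : ℂ) *
        (inner ℂ (φ j) ((LinearMap.adjoint (L a) ∘ₗ L a') (φ j)) : ℂ)
      = if a = a' then (α : ℂ) else 0) :
    (∀ v : H,
      0 ≤ (inner ℂ v (v - (∑ a, LinearMap.adjoint (L a) ∘ₗ L a) v) : ℂ)) ∧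
    ((∀ j, η j = 1 / Real.sqrt d) →
      ∑ a, LinearMap.adjoint (L a) ∘ₗ L a = LinearMap.id) := by
  have : Nonempty (Fin d) := ⟨⟨0, hd⟩⟩
  have hα_le (j : Fin d) : α ≤ η j ^ 2 := hα ▸ ciInf_le (Finite.bddBelow_range _) j
  have hα_pos : 0 < α := by
    obtain ⟨j, hj⟩ := exists_eq_ciInf_of_finite (f := fun j => η j ^ 2)
    exact hα ▸ hj ▸ pow_pos (hη j) 2
  have hM := φ.sum_adjoint_comp_apply_of_Sc_orthogonal η hη hα_pos L (by simp)
    (by simpa using horth)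
  constructor
  · intro v
    have h := φ.inner_apply_nonneg_of_apply_eq_smul
      (LinearMap.id - ∑ a, LinearMap.adjoint (L a) ∘ₗ L a) (fun j => 1 - α / η j ^ 2)
      (fun j => sub_nonneg.mpr ((div_le_one (pow_pos (hη j) 2)).mpr (hα_le j)))
      (fun j => by simp [hM, sub_smul]) v
    simpa only [LinearMap.sub_apply, LinearMap.id_apply] using h
  · intro hη_eq
    have hη_sq (j : Fin d) : η j ^ 2 = 1 / d := by
      rw [hη_eq j, div_pow, one_pow, Real.sq_sqrt (Nat.cast_nonneg d)]
    have hα_eq : α = 1 / d := by simp only [hα, hη_sq, ciInf_const]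
    have hcoef (j : Fin d) : α / η j ^ 2 = 1 := by
      rw [hα_eq, hη_sq, div_self (by positivity)]
    exact φ.toBasis.ext fun j => by simp [hM, hcoef]

/-- Application of Lemma 1 in the proof of Theorem 3: if `L_1, …, L_{d²}` are
operators on a `d`-dimensional complex Hilbert space that are orthogonal with squared
norm `α := min_j η_j²` for the inner product `⟨A,B⟩_Sc = d ∑_j η_j² ⟨φ_j, A†B φ_j⟩`,
then `∑_a L_a† L_a ≤ 𝕀` in the Loewner order; and if moreover `η_j = 1/√d` for all
`j` (maximally entangled case, `α = 1/d`), then `∑_a L_a† L_a = 𝕀`, i.e. `(L_a)_a` is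
a trace-preserving quantum operation. -/
theorem sum_adjoint_comp_le_one_of_Sc_orthogonal
    {H : Type*} [NormedAddCommGroup H] [InnerProductSpace ℂ H] [FiniteDimensional ℂ H]
    (d : ℕ) (hd : 1 ≤ d) (hdim : Module.finrank ℂ H = d)
    (φ : OrthonormalBasis (Fin d) ℂ H)
    (η : Fin d → ℝ) (hη : ∀ j, 0 < η j) (hη1 : ∑ j, η j ^ 2 = 1)
    (α : ℝ) (hα : α = ⨅ j, η j ^ 2)
    (L : Fin (d ^ 2) → (H →ₗ[ℂ] H))
    (horth : ∀ a a' : Fin (d ^ 2),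
      (d : ℂ) * ∑ j, ((η j ^ 2 : ℝ) : ℂ) *
        (inner ℂ (φ j) ((LinearMap.adjoint (L a) ∘ₗ L a') (φ j)) : ℂ)
      = if a = a' then (α : ℂ) else 0) :
    (∀ v : H,
      0 ≤ (inner ℂ v (v - (∑ a, LinearMap.adjoint (L a) ∘ₗ L a) v) : ℂ)) ∧
    ((∀ j, η j = 1 / Real.sqrt d) →
      ∑ a, LinearMap.adjoint (L a) ∘ₗ L a = LinearMap.id) :=
  sum_adjoint_comp_le_one_of_Sc_orthogonal_general d hd φ η hη α hα L horth
end

section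
/- On ℂ², let |0⟩ := (1,0)ᵀ, |1⟩ := (0,1)ᵀ, |+⟩ := (1/√2)(1,1)ᵀ, |−⟩ := (1/√2)(1,−1)ᵀ, and set X₀ := |+⟩⟨+|, X₁ := |−⟩⟨−|, Z₀ := |0⟩⟨0|, Z₁ := |1⟩⟨1|. Define L̂₁ := X₀Z₀, L̂₂ := X₁Z₀, L̂₃ := X₀Z₁, L̂₄ := X₁Z₁. Then: (a) Σ_{a=1}^4 L̂_a† L̂_a = 𝕀; (b) tr(L̂_a† L̂_{a'}) = (1/2)·δ_{aa'} for all a, a' ∈ {1,2,3,4}; and (c) X₀ = L̂₁ + L̂₃, X₁ = L̂₂ + L̂₄, Z₀ = L̂₁ + L̂₂, Z₁ = L̂₃ + L̂₄. -/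
open scoped Matrix

namespace MeanKingQubit

/-- The rank-one matrix `|u⟩⟨v| = u vᴴ`. -/
noncomputable def ketbra {n : ℕ} (u v : Fin n → ℂ) : Matrix (Fin n) (Fin n) ℂ :=
  Matrix.of fun i j => u i * star (v j)

noncomputable def ket0 : Fin 2 → ℂ := ![1, 0]
noncomputable def ket1 : Fin 2 → ℂ := ![0, 1]
noncomputable def ketPlus : Fin 2 → ℂ :=
  ![((1 / Real.sqrt 2 : ℝ) : ℂ), ((1 / Real.sqrt 2 : ℝ) : ℂ)]
noncomputable def ketMinus : Fin 2 → ℂ :=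
  ![((1 / Real.sqrt 2 : ℝ) : ℂ), -((1 / Real.sqrt 2 : ℝ) : ℂ)]

/-- `X₀ = |+⟩⟨+|`, eigenprojector of `σ_x`. -/
noncomputable def X0 : Matrix (Fin 2) (Fin 2) ℂ := ketbra ketPlus ketPlus
/-- `X₁ = |−⟩⟨−|`, eigenprojector of `σ_x`. -/
noncomputable def X1 : Matrix (Fin 2) (Fin 2) ℂ := ketbra ketMinus ketMinus
/-- `Z₀ = |0⟩⟨0|`, eigenprojector of `σ_z`. -/
noncomputable def Z0 : Matrix (Fin 2) (Fin 2) ℂ := ketbra ket0 ket0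
/-- `Z₁ = |1⟩⟨1|`, eigenprojector of `σ_z`. -/
noncomputable def Z1 : Matrix (Fin 2) (Fin 2) ℂ := ketbra ket1 ket1

/-- The error operators `L̂₁ = X₀Z₀`, `L̂₂ = X₁Z₀`, `L̂₃ = X₀Z₁`, `L̂₄ = X₁Z₁`. -/
noncomputable def Lhat : Fin 4 → Matrix (Fin 2) (Fin 2) ℂ :=
  ![X0 * Z0, X1 * Z0, X0 * Z1, X1 * Z1]


/-! Both `(X₀, X₁)` and `(Z₀, Z₁)` are projective measurements, and `L̂` runs over the products
`Xᵢ Zⱼ`. Hermiticity, `Xᵢ Xᵢ' = δᵢᵢ' Xᵢ`, `Zⱼ Zⱼ' = δⱼⱼ' Zⱼ` and `∑ Xᵢ = ∑ Zⱼ = 𝕀` give (a) and (c)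
directly, and with cyclicity of the trace `tr((Xᵢ Zⱼ)† Xᵢ' Zⱼ') = δᵢᵢ' δⱼⱼ' tr(Xᵢ Zⱼ)`.
Finally `tr(Xᵢ Zⱼ) = |⟨xᵢ|zⱼ⟩|² = 1/2` because the `σ_x` and `σ_z` eigenbases are mutually
unbiased. -/

open Matrix

section ProjectiveMeasurement

variable {ι κ n 𝕜 : Type*} [Fintype ι] [DecidableEq ι] [Fintype κ] [DecidableEq κ]
  [Fintype n] [DecidableEq n] [CommRing 𝕜] [StarRing 𝕜]

structure IsProjectiveMeasurement (P : ι → Matrix n n 𝕜) : Prop where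
  isHermitian : ∀ i, (P i).IsHermitian
  mul_eq : ∀ i j, P i * P j = if i = j then P i else 0
  sum_eq_one : ∑ i, P i = 1

namespace IsProjectiveMeasurement

variable {P : ι → Matrix n n 𝕜} {Q : κ → Matrix n n 𝕜}

theorem mul_self (hP : IsProjectiveMeasurement P) (i : ι) : P i * P i = P i := by
  simpa using hP.mul_eq i i

theorem sum_mul (hP : IsProjectiveMeasurement P) (A : Matrix n n 𝕜) : ∑ i, P i * A = A := by
  rw [← Finset.sum_mul, hP.sum_eq_one, one_mul]

theorem mul_sum (hP : IsProjectiveMeasurement P) (A : Matrix n n 𝕜) : ∑ i, A * P i = A := by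
  rw [← Finset.mul_sum, hP.sum_eq_one, mul_one]

theorem conjTranspose_mul_eq (hP : IsProjectiveMeasurement P) (hQ : IsProjectiveMeasurement Q)
    (i : ι) (j : κ) : (P i * Q j)ᴴ = Q j * P i := by
  rw [conjTranspose_mul, (hP.isHermitian i).eq, (hQ.isHermitian j).eq]

theorem sum_conjTranspose_mul_self (hP : IsProjectiveMeasurement P)
    (hQ : IsProjectiveMeasurement Q) : ∑ j, ∑ i, (P i * Q j)ᴴ * (P i * Q j) = 1 := by
  have hterm (i : ι) (j : κ) : (P i * Q j)ᴴ * (P i * Q j) = Q j * P i * Q j := by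
    rw [hP.conjTranspose_mul_eq hQ, mul_assoc, ← mul_assoc (P i), hP.mul_self, ← mul_assoc]
  calc ∑ j, ∑ i, (P i * Q j)ᴴ * (P i * Q j)
      = ∑ j, (∑ i, Q j * P i) * Q j := by simp_rw [hterm, Finset.sum_mul]
    _ = ∑ j, Q j := by simp_rw [hP.mul_sum, hQ.mul_self]
    _ = 1 := hQ.sum_eq_one

theorem trace_conjTranspose_mul (hP : IsProjectiveMeasurement P)
    (hQ : IsProjectiveMeasurement Q) (i i' : ι) (j j' : κ) :
    ((P i * Q j)ᴴ * (P i' * Q j')).trace =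
      if i = i' ∧ j = j' then (P i * Q j).trace else 0 := by
  rw [hP.conjTranspose_mul_eq hQ, mul_assoc, trace_mul_comm, ← mul_assoc (P i),
    mul_assoc _ (Q j'), hP.mul_eq, hQ.mul_eq]
  rcases eq_or_ne j j' with rfl | hj
  · by_cases hi : i = i' <;> simp [hi]
  · simp [hj, hj.symm]

end IsProjectiveMeasurement

end ProjectiveMeasurement

section Ketbra

variable {n : ℕ}

theorem ketbra_eq_vecMulVec (u v : Fin n → ℂ) : ketbra u v = vecMulVec u (star v) := rfl

theorem conjTranspose_ketbra (u v : Fin n → ℂ) : (ketbra u v)ᴴ = ketbra v u := by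
  simp [ketbra_eq_vecMulVec]

theorem ketbra_mul_ketbra (u v w x : Fin n → ℂ) :
    ketbra u v * ketbra w x = (star v ⬝ᵥ w) • ketbra u x := by
  simp [ketbra_eq_vecMulVec, vecMulVec_mul_vecMulVec, vecMulVec_smul]

theorem trace_ketbra (u v : Fin n → ℂ) : (ketbra u v).trace = star v ⬝ᵥ u := by
  rw [ketbra_eq_vecMulVec, trace_vecMulVec, dotProduct_comm]

theorem trace_ketbra_mul_ketbra (u v : Fin n → ℂ) :
    (ketbra u u * ketbra v v).trace = (star u ⬝ᵥ v) * (star v ⬝ᵥ u) := by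
  rw [ketbra_mul_ketbra, trace_smul, trace_ketbra, smul_eq_mul]

theorem sum_ketbra_self_eq_one {b : Fin n → Fin n → ℂ}
    (hb : ∀ i j, star (b i) ⬝ᵥ b j = if i = j then 1 else 0) :
    ∑ i, ketbra (b i) (b i) = 1 := by
  set U : Matrix (Fin n) (Fin n) ℂ := of fun k i => b i k
  have hUU : Uᴴ * U = 1 := by
    ext i j
    simpa [U, mul_apply, one_apply, dotProduct] using hb i j
  have hsum : ∑ i, ketbra (b i) (b i) = U * Uᴴ := by
    ext k l
    simp [U, ketbra, mul_apply, Matrix.sum_apply]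
  rw [hsum, mul_eq_one_comm, hUU]

theorem isProjectiveMeasurement_ketbra {b : Fin n → Fin n → ℂ}
    (hb : ∀ i j, star (b i) ⬝ᵥ b j = if i = j then 1 else 0) :
    IsProjectiveMeasurement fun i => ketbra (b i) (b i) where
  isHermitian i := conjTranspose_ketbra _ _
  mul_eq i j := by
    rw [ketbra_mul_ketbra, hb]
    split_ifs with h
    · rw [h, one_smul]
    · rw [zero_smul]
  sum_eq_one := sum_ketbra_self_eq_one hb

end Ketbra

noncomputable def xBasis : Fin 2 → Fin 2 → ℂ := ![ketPlus, ketMinus]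
noncomputable def zBasis : Fin 2 → Fin 2 → ℂ := ![ket0, ket1]

noncomputable def X (i : Fin 2) : Matrix (Fin 2) (Fin 2) ℂ := ketbra (xBasis i) (xBasis i)
noncomputable def Z (j : Fin 2) : Matrix (Fin 2) (Fin 2) ℂ := ketbra (zBasis j) (zBasis j)

theorem inv_ofReal_sqrt_two_mul_self :
    ((Real.sqrt 2 : ℝ) : ℂ)⁻¹ * ((Real.sqrt 2 : ℝ) : ℂ)⁻¹ = 2⁻¹ := by
  rw [← mul_inv, ← Complex.ofReal_mul, Real.mul_self_sqrt zero_le_two, Complex.ofReal_ofNat]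

theorem xBasis_orthonormal (i j : Fin 2) :
    star (xBasis i) ⬝ᵥ xBasis j = if i = j then 1 else 0 := by
  fin_cases i <;> fin_cases j <;>
    simp [xBasis, ketPlus, ketMinus, dotProduct, Fin.sum_univ_two,
      inv_ofReal_sqrt_two_mul_self] <;>
    norm_num

theorem zBasis_orthonormal (i j : Fin 2) :
    star (zBasis i) ⬝ᵥ zBasis j = if i = j then 1 else 0 := by
  fin_cases i <;> fin_cases j <;> simp [zBasis, ket0, ket1, dotProduct, Fin.sum_univ_two]

theorem xBasis_zBasis_unbiased (i j : Fin 2) :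
    (star (xBasis i) ⬝ᵥ zBasis j) * (star (zBasis j) ⬝ᵥ xBasis i) = ((1 / 2 : ℝ) : ℂ) := by
  fin_cases i <;> fin_cases j <;>
    simp [xBasis, zBasis, ketPlus, ketMinus, ket0, ket1, dotProduct, Fin.sum_univ_two,
      inv_ofReal_sqrt_two_mul_self]

def errorIndex : Fin 2 × Fin 2 ≃ Fin 4 := finProdFinEquiv

theorem Lhat_errorIndex (i j : Fin 2) : Lhat (errorIndex (j, i)) = X i * Z j := by
  fin_cases i <;> fin_cases j <;> rfl

theorem isProjectiveMeasurement_X : IsProjectiveMeasurement X :=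
  isProjectiveMeasurement_ketbra xBasis_orthonormal

theorem isProjectiveMeasurement_Z : IsProjectiveMeasurement Z :=
  isProjectiveMeasurement_ketbra zBasis_orthonormal

theorem trace_X_mul_Z (i j : Fin 2) : (X i * Z j).trace = ((1 / 2 : ℝ) : ℂ) := by
  rw [X, Z, trace_ketbra_mul_ketbra, xBasis_zBasis_unbiased]

/-- Section VI of the paper (the qubit example): the operators `L̂_a` satisfy
(a) the completeness relation `∑_a L̂_a† L̂_a = 𝕀`, (b) the Hilbert–Schmidt
orthogonality `tr(L̂_a† L̂_{a'}) = (1/2) δ_{aa'}`, and (c) the decompositions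
`X₀ = L̂₁ + L̂₃`, `X₁ = L̂₂ + L̂₄`, `Z₀ = L̂₁ + L̂₂`, `Z₁ = L̂₃ + L̂₄` of the
projective measurements `(X₀, X₁)` and `(Z₀, Z₁)`. -/
theorem qubit_error_operators :
    (∑ a, (Lhat a)ᴴ * Lhat a = 1) ∧
    (∀ a a' : Fin 4,
      ((Lhat a)ᴴ * Lhat a').trace = if a = a' then ((1 / 2 : ℝ) : ℂ) else 0) ∧
    (X0 = Lhat 0 + Lhat 2 ∧ X1 = Lhat 1 + Lhat 3 ∧
      Z0 = Lhat 0 + Lhat 1 ∧ Z1 = Lhat 2 + Lhat 3) := by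
  have hX := isProjectiveMeasurement_X
  have hZ := isProjectiveMeasurement_Z
  refine ⟨?_, fun a a' => ?_, ?_⟩
  · rw [← errorIndex.sum_comp, Fintype.sum_prod_type]
    simpa only [Lhat_errorIndex] using hX.sum_conjTranspose_mul_self hZ
  · obtain ⟨⟨j, i⟩, rfl⟩ := errorIndex.surjective a
    obtain ⟨⟨j', i'⟩, rfl⟩ := errorIndex.surjective a'
    rw [Lhat_errorIndex, Lhat_errorIndex, hX.trace_conjTranspose_mul hZ, trace_X_mul_Z]
    simp [and_comm]
  · have hX_eq (i : Fin 2) : X i = X i * Z 0 + X i * Z 1 := by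
      rw [← Fin.sum_univ_two (fun j => X i * Z j), hZ.mul_sum]
    have hZ_eq (j : Fin 2) : Z j = X 0 * Z j + X 1 * Z j := by
      rw [← Fin.sum_univ_two (fun i => X i * Z j), hX.sum_mul]
    exact ⟨hX_eq 0, hX_eq 1, hZ_eq 0, hZ_eq 1⟩

end MeanKingQubit
end
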